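/- Let D be a finite directed graph and v a vertex with no out-neighbors (a sink). Let R(v) be the set of vertices that can reach v by a directed path (including v itself). Then S is a minimum knot-free vertex deletion set of D if and only if S is a minimum knot-free vertex deletion set of D - R(v). -/

import Mathlib

open Relation Set

variable {V : Type*}

/-- Arcs of the induced subgraph of the digraph `A` after deleting the vertex set `S`. -/
def delArcs (A : V → V → Prop) (S : Set V) : V → V → Prop :=
  fun u v => u ∉ S ∧ v ∉ S ∧ A u v

/-- `K` is a knot of the digraph `A`: a strongly connected component of size at least 2
with no arc leaving it.  (A strongly connected set that is closed under out-arcs is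
automatically a maximal strongly connected set, i.e. a strongly connected component.) -/
def IsKnot (A : V → V → Prop) (K : Set V) : Prop :=
  2 ≤ K.ncard ∧ (∀ u ∈ K, ∀ v ∈ K, Relation.ReflTransGen A u v) ∧
    (∀ u ∈ K, ∀ v, A u v → v ∈ K)

/-- A digraph is knot-free if it contains no knot. -/
def KnotFree (A : V → V → Prop) : Prop := ¬ ∃ K : Set V, IsKnot A K

/-- `S` is a knot-free vertex deletion set of the digraph `A`. -/
def IsKFVDS (A : V → V → Prop) (S : Set V) : Prop := KnotFree (delArcs A S)

/-- `S` is an inclusion-wise minimal knot-free vertex deletion set. -/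
def MinimalKFVDS (A : V → V → Prop) (S : Set V) : Prop :=
  IsKFVDS A S ∧ ∀ S' : Set V, S' ⊂ S → ¬ IsKFVDS A S'

/-- `S` is a minimum-size knot-free vertex deletion set. -/
def MinimumKFVDS (A : V → V → Prop) (S : Set V) : Prop :=
  IsKFVDS A S ∧ ∀ S' : Set V, IsKFVDS A S' → S.ncard ≤ S'.ncard

/-- `v` is a sink of the induced subgraph `D - S`. -/
def IsSinkIn (A : V → V → Prop) (S : Set V) (v : V) : Prop :=
  v ∉ S ∧ ∀ w, ¬ delArcs A S v w

/-- The set of sinks of `D - S`. -/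
def sinksIn (A : V → V → Prop) (S : Set V) : Set V := {v | IsSinkIn A S v}

/-- `N^+(x)`, the out-neighborhood of `x`. -/
def outNbrs (A : V → V → Prop) (x : V) : Set V := {v | A x v}

/-- `R^-(x)` : the set of vertices (including `x`) with a directed path to `x`
in `D - N^+(x)`. -/
def RminusSet (A : V → V → Prop) (x : V) : Set V :=
  {u | Relation.ReflTransGen (delArcs A (outNbrs A x)) u x}

/-- `R(x) = N^+(x) ∪ R^-(x)`. -/
def Rset (A : V → V → Prop) (x : V) : Set V := outNbrs A x ∪ RminusSet A x

/-! A vertex `u` that cannot reach the sink `v` has no out-arc into the ancestor set `R` of `v`,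
so deleting `R` does not change the out-arcs of vertices outside `R`. A knot of `D - S` with
`S ∩ R = ∅` avoids `R` (otherwise, following a path to `v`, the closed knot would contain the
sink `v`), and a knot of `D - (R ∪ S)` avoids `R` trivially; hence the two graphs have the same
knots. Therefore `S ↦ S \ R` maps deletion sets of `D` to deletion sets of `D` disjoint from `R`
without increasing their size, and on sets disjoint from `R` the deletion sets of `D` and of
`D - R` coincide. -/

theorem delArcs_delArcs (A : V → V → Prop) (R S : Set V) :
    delArcs (delArcs A R) S = delArcs A (R ∪ S) := by
  funext u w
  simp only [delArcs, mem_union, eq_iff_iff]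
  tauto

theorem delArcs_union_iff_of_notMem {A : V → V → Prop} {R : Set V}
    (hR : ∀ ⦃u w⦄, A u w → w ∈ R → u ∈ R) (S : Set V) {u : V} (hu : u ∉ R) (w : V) :
    delArcs A (R ∪ S) u w ↔ delArcs A S u w := by
  simp only [delArcs, mem_union, not_or]
  exact ⟨fun ⟨⟨_, huS⟩, ⟨_, hwS⟩, huw⟩ => ⟨huS, hwS, huw⟩,
    fun ⟨huS, hwS, huw⟩ => ⟨⟨hu, huS⟩, ⟨fun hw => hu (hR huw hw), hwS⟩, huw⟩⟩

namespace IsKnot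

variable {B C : V → V → Prop} {K : Set V}

theorem exists_rel (hK : IsKnot B K) {u : V} (hu : u ∈ K) : ∃ w, B u w := by
  obtain ⟨w, hwK, hwu⟩ := exists_ne_of_one_lt_ncard (one_lt_two.trans_le hK.1) u
  rcases (hK.2.1 u hu w hwK).cases_head with rfl | ⟨c, huc, -⟩
  · exact absurd rfl hwu
  · exact ⟨c, huc⟩

theorem notMem_of_delArcs {A : V → V → Prop} {T : Set V} (hK : IsKnot (delArcs A T) K)
    {u : V} (hu : u ∈ K) : u ∉ T :=
  (hK.exists_rel hu).choose_spec.1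

theorem of_forall_rel_iff (hK : IsKnot B K) (hBC : ∀ u ∈ K, ∀ w, B u w ↔ C u w) :
    IsKnot C K := by
  have hclosed : ∀ u ∈ K, ∀ w, C u w → w ∈ K :=
    fun u hu w huw => hK.2.2 u hu w ((hBC u hu w).2 huw)
  refine ⟨hK.1, fun u hu w hw => ?_, hclosed⟩
  induction hK.2.1 u hu w hw using ReflTransGen.head_induction_on with
  | refl => exact .refl
  | head hac _ ih =>
    exact .head ((hBC _ hu _).1 hac) (ih (hK.2.2 _ hu _ hac))

theorem disjoint_ancestors {A : V → V → Prop} {v : V} (hv : ∀ w, ¬ A v w) {T : Set V}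
    (hT : Disjoint T {u | ReflTransGen A u v}) (hK : IsKnot (delArcs A T) K) :
    Disjoint K {u | ReflTransGen A u v} := by
  refine disjoint_left.2 fun u hu huv => ?_
  have hvK : v ∈ K := by
    induction huv using ReflTransGen.head_induction_on with
    | refl => exact hu
    | head hac hcv ih =>
      exact ih (hK.2.2 _ hu _ ⟨hK.notMem_of_delArcs hu, disjoint_right.1 hT hcv, hac⟩)
  obtain ⟨w, hvw⟩ := hK.exists_rel hvK
  exact hv w hvw.2.2

theorem of_delArcs_union {A : V → V → Prop} {R S : Set V}
    (hR : ∀ ⦃u w⦄, A u w → w ∈ R → u ∈ R) (hK : IsKnot (delArcs A (R ∪ S)) K) :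
    IsKnot (delArcs A S) K :=
  hK.of_forall_rel_iff fun _ hu =>
    delArcs_union_iff_of_notMem hR S fun huR => hK.notMem_of_delArcs hu (mem_union_left S huR)

theorem delArcs_ancestors_union {A : V → V → Prop} {v : V} (hv : ∀ w, ¬ A v w) {S : Set V}
    (hS : Disjoint S {u | ReflTransGen A u v}) (hK : IsKnot (delArcs A S) K) :
    IsKnot (delArcs A ({u | ReflTransGen A u v} ∪ S)) K :=
  hK.of_forall_rel_iff fun _ hu w =>
    (delArcs_union_iff_of_notMem (fun _ _ huw hw => .head huw hw) S
      (disjoint_left.1 (hK.disjoint_ancestors hv hS) hu) w).symm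

end IsKnot

theorem IsKFVDS.to_delArcs {A : V → V → Prop} {R S : Set V}
    (hR : ∀ ⦃u w⦄, A u w → w ∈ R → u ∈ R) (hS : IsKFVDS A S) :
    IsKFVDS (delArcs A R) S := by
  rw [IsKFVDS, delArcs_delArcs]
  exact fun ⟨K, hK⟩ => hS ⟨K, hK.of_delArcs_union hR⟩

theorem IsKFVDS.of_delArcs_ancestors {A : V → V → Prop} {v : V} (hv : ∀ w, ¬ A v w)
    {S : Set V} (hSR : Disjoint S {u | ReflTransGen A u v})
    (hS : IsKFVDS (delArcs A {u | ReflTransGen A u v}) S) : IsKFVDS A S := by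
  rw [IsKFVDS, delArcs_delArcs] at hS
  exact fun ⟨K, hK⟩ => hS ⟨K, hK.delArcs_ancestors_union hv hSR⟩

theorem IsKFVDS.sdiff_of_delArcs_ancestors {A : V → V → Prop} {v : V} (hv : ∀ w, ¬ A v w)
    {S : Set V} (hS : IsKFVDS (delArcs A {u | ReflTransGen A u v}) S) :
    IsKFVDS A (S \ {u | ReflTransGen A u v}) := by
  refine .of_delArcs_ancestors hv disjoint_sdiff_left ?_
  rwa [IsKFVDS, delArcs_delArcs, union_sdiff_self, ← delArcs_delArcs]

/-- If `v` is a sink of `D` and `R(v)` is the set of vertices with a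
directed path to `v` (including `v`), then `S` is a minimum knot-free vertex deletion
set of `D` iff `S` is a minimum knot-free vertex deletion set of `D - R(v)`. -/
theorem stmt6 [Fintype V] (A : V → V → Prop) (v : V)
    (hv : ∀ w, ¬ A v w) (S : Set V) :
    MinimumKFVDS A S ↔
      Disjoint S {u | Relation.ReflTransGen A u v} ∧
        MinimumKFVDS (delArcs A {u | Relation.ReflTransGen A u v}) S := by
  set R := {u | ReflTransGen A u v}
  have hR : ∀ ⦃u w⦄, A u w → w ∈ R → u ∈ R := fun _ _ huw hw => .head huw hw
  constructor
  · rintro ⟨hS, hmin⟩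
    have hSR : S \ R = S := eq_of_subset_of_ncard_le sdiff_subset
      (hmin _ ((hS.to_delArcs hR).sdiff_of_delArcs_ancestors hv)) (toFinite S)
    refine ⟨disjoint_comm.1 (sdiff_eq_self_iff_disjoint.1 hSR), hS.to_delArcs hR,
      fun S' hS' => ?_⟩
    calc S.ncard ≤ (S' \ R).ncard := hmin _ (hS'.sdiff_of_delArcs_ancestors hv)
      _ ≤ S'.ncard := ncard_le_ncard sdiff_subset (toFinite S')
  · rintro ⟨hSR, hS, hmin⟩
    exact ⟨hS.of_delArcs_ancestors hv hSR, fun S' hS' => hmin _ (hS'.to_delArcs hR)⟩
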